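/- Let u : ℕ → ℝ be eventually positive with u(n) = O(E(n)·n·√(a(n))) and u(n) = Ω(E(n)·n·√(a(n))) (per-cell traffic load), where E, a : ℕ → ℝ are eventually positive. If the per-cell service rate is Θ(1), then the aggregate throughput T(n) = Θ(n/u(n)) satisfies T(n) = Θ(1/(E(n)·√(a(n)))). In particular, with D(n) = Θ(E(n)/√(a(n))), one has T(n)·D(n) = Θ(1/a(n)). -/

import Mathlib

/-- Two-sided asymptotic equivalence: `f = Θ(g)`. -/
def IsTheta (f g : ℕ → ℝ) : Prop :=
  ∃ c C : ℝ, 0 < c ∧ 0 < C ∧ ∃ N : ℕ, ∀ n ≥ N, c * g n ≤ f n ∧ f n ≤ C * g n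

/-- Eventually positive function. -/
def EventuallyPos (f : ℕ → ℝ) : Prop := ∃ N : ℕ, ∀ n ≥ N, 0 < f n

/-- Abstract multihop analysis: if the per-cell load is
`u(n) = Θ(E(n)·n·√(a(n)))`, then `T(n) = n/u(n) = Θ(1/(E(n)√(a(n))))`, and with
`D(n) = Θ(E(n)/√(a(n)))` one gets `T(n)·D(n) = Θ(1/a(n))`. -/
theorem stmt_19 (u E a D : ℕ → ℝ) (hu : EventuallyPos u) (hE : EventuallyPos E)
    (ha : EventuallyPos a) (hD : EventuallyPos D)
    (huT : IsTheta u (fun n => E n * n * Real.sqrt (a n)))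
    (hDT : IsTheta D (fun n => E n / Real.sqrt (a n))) :
    IsTheta (fun n => (n : ℝ) / u n) (fun n => 1 / (E n * Real.sqrt (a n))) ∧
    IsTheta (fun n => ((n : ℝ) / u n) * D n) (fun n => 1 / a n) := by
  obtain ⟨Nu, hNu⟩ := hu
  obtain ⟨NE, hNE⟩ := hE
  obtain ⟨Na, hNa⟩ := ha
  obtain ⟨c, C, hc, hC, N1, h1⟩ := huT
  obtain ⟨d, Dd, hd, hDd, N2, h2⟩ := hDT
  set N := max (max (max Nu NE) (max Na 1)) (max N1 N2) with hN
  have key : ∀ n ≥ N, 0 < u n ∧ 0 < E n ∧ 0 < a n ∧ 0 < Real.sqrt (a n) ∧ (1:ℝ) ≤ n ∧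
      c * (E n * n * Real.sqrt (a n)) ≤ u n ∧ u n ≤ C * (E n * n * Real.sqrt (a n)) ∧
      d * (E n / Real.sqrt (a n)) ≤ D n ∧ D n ≤ Dd * (E n / Real.sqrt (a n)) := by
    intro n hn
    have h1' := h1 n (le_trans (le_trans (le_max_left _ _) (le_max_right _ _)) hn)
    have h2' := h2 n (le_trans (le_trans (le_max_right _ _) (le_max_right _ _)) hn)
    have hun := hNu n (by omega)
    have hEn := hNE n (by omega)
    have han := hNa n (by omega)
    have hn1 : (1:ℝ) ≤ n := by
      have : 1 ≤ n := by omega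
      exact_mod_cast this
    exact ⟨hun, hEn, han, Real.sqrt_pos.mpr han, hn1, h1'.1, h1'.2, h2'.1, h2'.2⟩
  constructor
  · refine ⟨1/C, 1/c, by positivity, by positivity, N, fun n hn => ?_⟩
    obtain ⟨hun, hEn, han, hsan, hn1, hl, hr, -, -⟩ := key n hn
    have hnpos : (0:ℝ) < n := by linarith
    constructor
    · rw [div_mul_div_comm, one_mul, div_le_div_iff₀ (by positivity) hun]
      nlinarith [hr]
    · rw [div_mul_div_comm, one_mul, div_le_div_iff₀ hun (by positivity)]
      nlinarith [hl]
  · refine ⟨d/C, Dd/c, by positivity, by positivity, N, fun n hn => ?_⟩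
    obtain ⟨hun, hEn, han, hsan, hn1, hl, hr, hdl, hdr⟩ := key n hn
    have hnpos : (0:ℝ) < n := by linarith
    have hsq : Real.sqrt (a n) * Real.sqrt (a n) = a n := Real.mul_self_sqrt han.le
    have hDn : 0 < D n := lt_of_lt_of_le (by positivity) hdl
    constructor
    · have hT : 1 / C * (1 / (E n * Real.sqrt (a n))) ≤ n / u n := by
        rw [div_mul_div_comm, one_mul, div_le_div_iff₀ (by positivity) hun]
        nlinarith [hr]
      calc d / C * (1 / a n) = (d * (E n / Real.sqrt (a n))) * (1 / C * (1 / (E n * Real.sqrt (a n)))) := by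
            field_simp
            linear_combination hsq
        _ ≤ D n * (n / u n) := mul_le_mul hdl hT (by positivity) hDn.le
        _ = n / u n * D n := by ring
    · have hT : n / u n ≤ 1 / c * (1 / (E n * Real.sqrt (a n))) := by
        rw [div_mul_div_comm, one_mul, div_le_div_iff₀ hun (by positivity)]
        nlinarith [hl]
      calc n / u n * D n ≤ (1 / c * (1 / (E n * Real.sqrt (a n)))) * (Dd * (E n / Real.sqrt (a n))) :=
            mul_le_mul hT hdr hDn.le (by positivity)
        _ = Dd / c * (1 / a n) := by
            field_simp
            linear_combination (-1) * hsq
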